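/- arXiv:1111.4160 — 9 statements merged into one kernel-verified Lean document; each statement's English description precedes it below -/
import Mathlib

section
/- Let A be a C*-algebra and let a, b ∈ A satisfy ‖a‖ ≤ 1, ‖b‖ ≤ 1, a·b·a = a, b·a·b = b, and suppose both products a·b and b·a are self-adjoint. Then b = star a; in particular a·(star a)·a = a (so a is a partial isometry), (star a)·a = b·a and a·(star a) = a·b. -/
/-!
Since `a * b * a = a`, the self-adjoint element `p = b * a` is a projection with `a * p = a`.
For a contraction `x` we have `star x * x ≤ 1`, hence `star c * (star x * x) * c ≤ star c * c`.
With `x = a`, `c = p` this gives `star a * a = p * (star a * a) * p ≤ p`; with `x = b`, `c = a`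
it gives `p = star (b * a) * (b * a) ≤ star a * a`. So `star a * a = b * a`, and by symmetry
(and after applying `star`) `star b * b = a * b = a * star a`; these identities make
`star (b - star a) * (b - star a)` vanish.
-/

section StarOrdered

variable {A : Type*} [NonUnitalCStarAlgebra A] [PartialOrder A] [StarOrderedRing A]

lemma star_left_conjugate_star_mul_self_le {b : A} (hb : ‖b‖ ≤ 1) (c : A) :
    star c * (star b * b) * c ≤ star c * c := by
  have hsb : ‖star b * b‖ ≤ 1 := by
    rw [CStarRing.norm_star_mul_self]
    exact mul_le_one₀ hb (norm_nonneg b) hb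
  exact (CStarAlgebra.star_left_conjugate_le_norm_smul (.star_mul_self b)).trans
    (smul_le_of_le_one_left (star_mul_self_nonneg c) hsb)

lemma star_mul_self_le_of_mul_eq {a p : A} (hp : IsStarProjection p) (ha : ‖a‖ ≤ 1)
    (hap : a * p = a) : star a * a ≤ p := by
  calc star a * a = star (a * p) * (a * p) := by rw [hap]
    _ = star p * (star a * a) * p := by simp only [star_mul, mul_assoc]
    _ ≤ star p * p := star_left_conjugate_star_mul_self_le ha p
    _ = p := by rw [hp.isSelfAdjoint.star_eq, hp.isIdempotentElem.eq]

lemma star_mul_self_mul_le {b : A} (hb : ‖b‖ ≤ 1) (a : A) :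
    star (b * a) * (b * a) ≤ star a * a := by
  simpa only [star_mul, mul_assoc] using star_left_conjugate_star_mul_self_le hb a

lemma StarOrderedRing.star_mul_self_eq_mul_of_mul_mul_eq_self {a b : A} (ha : ‖a‖ ≤ 1)
    (hb : ‖b‖ ≤ 1) (haba : a * b * a = a) (hba : IsSelfAdjoint (b * a)) :
    star a * a = b * a := by
  have hp : IsStarProjection (b * a) :=
    ⟨by rw [IsIdempotentElem, mul_assoc, ← mul_assoc a, haba], hba⟩
  refine le_antisymm (star_mul_self_le_of_mul_eq hp ha (by rw [← mul_assoc, haba])) ?_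
  calc b * a = star (b * a) * (b * a) := by rw [hba.star_eq, hp.isIdempotentElem.eq]
    _ ≤ star a * a := star_mul_self_mul_le hb a

end StarOrdered

lemma star_mul_self_eq_mul_of_mul_mul_eq_self {A : Type*} [NonUnitalCStarAlgebra A] {a b : A}
    (ha : ‖a‖ ≤ 1) (hb : ‖b‖ ≤ 1) (haba : a * b * a = a) (hba : IsSelfAdjoint (b * a)) :
    star a * a = b * a := by
  -- `A` carries no order of its own; the unitization has the spectral order.
  let _ := CStarAlgebra.spectralOrder (Unitization ℂ A)
  have _ := CStarAlgebra.spectralOrderedRing (Unitization ℂ A)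
  apply Unitization.inr_injective (R := ℂ)
  push_cast
  refine StarOrderedRing.star_mul_self_eq_mul_of_mul_mul_eq_self (by rwa [Unitization.norm_inr])
    (by rwa [Unitization.norm_inr]) ?_ (by simpa using hba.inr ℂ)
  exact_mod_cast congrArg ((↑) : A → Unitization ℂ A) haba

/-- C*-algebra characterization of partial isometries: if `a`, `b` are contractions with
`a*b*a = a`, `b*a*b = b` and both `a*b`, `b*a` self-adjoint, then `b = star a`; in particular
`a` is a partial isometry with source projection `b*a` and range projection `a*b`. -/
theorem stmt0 {A : Type*} [NonUnitalCStarAlgebra A]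
    (a b : A) (ha : ‖a‖ ≤ 1) (hb : ‖b‖ ≤ 1)
    (haba : a * b * a = a) (hbab : b * a * b = b)
    (hab : IsSelfAdjoint (a * b)) (hba : IsSelfAdjoint (b * a)) :
    b = star a ∧ a * star a * a = a ∧ star a * a = b * a ∧ a * star a = a * b := by
  have hsource := star_mul_self_eq_mul_of_mul_mul_eq_self ha hb haba hba
  have hrange' := star_mul_self_eq_mul_of_mul_mul_eq_self hb ha hbab hab
  have hab' : star b * star a = a * b := by rw [← star_mul, hab.star_eq]
  have hrange : a * star a = a * b := by
    have := star_mul_self_eq_mul_of_mul_mul_eq_self (a := star a) (b := star b)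
      (by rwa [norm_star]) (by rwa [norm_star])
      (by rw [← star_mul, ← star_mul, ← mul_assoc, haba]) (by rw [hab']; exact hab)
    rwa [star_star, hab'] at this
  obtain rfl : b = star a := by
    rw [← sub_eq_zero, ← CStarRing.star_mul_self_eq_zero_iff, star_sub, star_star, sub_mul,
      mul_sub, mul_sub, hrange', hrange, hab']
    abel
  exact ⟨rfl, haba, hsource, hrange⟩
end

section
/- Let E be a complex Hilbert space and T, S : E →L[ℂ] E continuous linear maps with ‖T‖ ≤ 1 and ‖S‖ ≤ 1, such that T ∘ S ∘ T = T, S ∘ T ∘ S = S, and the compositions S ∘ T and T ∘ S are self-adjoint (⟪(S∘T)x, y⟫ = ⟪x, (S∘T)y⟫ and ⟪(T∘S)x, y⟫ = ⟪x, (T∘S)y⟫ for all x, y). Then S equals the Hilbert-space adjoint of T; consequently T ∘ T† ∘ T = T (T is a partial isometry), T† ∘ T = S ∘ T, T ∘ T† = T ∘ S, and ‖T((S∘T)x)‖ = ‖(S∘T)x‖ for every x, i.e. T is isometric on the range of S∘T. -/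
open scoped ComplexInnerProductSpace
open ContinuousLinearMap

private lemma aux_norm_eq {E : Type*} [NormedAddCommGroup E] [InnerProductSpace ℂ E]
    (T S : E →L[ℂ] E) (hTnorm : ‖T‖ ≤ 1) (hSnorm : ‖S‖ ≤ 1)
    (hTST : T ∘L S ∘L T = T) (x : E) : ‖T x‖ = ‖(S ∘L T) x‖ := by
  have hTP : T ((S ∘L T) x) = T x := by
    conv_rhs => rw [← hTST]
    rfl
  have h1 : ‖T x‖ ≤ ‖(S ∘L T) x‖ := by
    rw [← hTP]
    calc ‖T ((S ∘L T) x)‖ ≤ ‖T‖ * ‖(S ∘L T) x‖ := T.le_opNorm _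
    _ ≤ 1 * ‖(S ∘L T) x‖ := by
        apply mul_le_mul_of_nonneg_right hTnorm (norm_nonneg _)
    _ = ‖(S ∘L T) x‖ := one_mul _
  have h2 : ‖(S ∘L T) x‖ ≤ ‖T x‖ := by
    calc ‖(S ∘L T) x‖ = ‖S (T x)‖ := rfl
    _ ≤ ‖S‖ * ‖T x‖ := S.le_opNorm _
    _ ≤ 1 * ‖T x‖ := by
        apply mul_le_mul_of_nonneg_right hSnorm (norm_nonneg _)
    _ = ‖T x‖ := one_mul _
  exact le_antisymm h1 h2

/-- Key step: under the contraction and `TST = T`, `ST` self-adjoint hypotheses,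
`T† T = S T`. -/
private lemma aux_adj {E : Type*} [NormedAddCommGroup E] [InnerProductSpace ℂ E]
    [CompleteSpace E]
    (T S : E →L[ℂ] E) (hTnorm : ‖T‖ ≤ 1) (hSnorm : ‖S‖ ≤ 1)
    (hTST : T ∘L S ∘L T = T)
    (hST : ∀ x y : E, ⟪(S ∘L T) x, y⟫ = ⟪x, (S ∘L T) y⟫) :
    adjoint T ∘L T = S ∘L T := by
  have hext := (ext_inner_map ((adjoint T ∘L T : E →L[ℂ] E) : E →ₗ[ℂ] E)
      ((S ∘L T : E →L[ℂ] E) : E →ₗ[ℂ] E)).mp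
  have key : ∀ x : E, ⟪(adjoint T ∘L T) x, x⟫ = ⟪(S ∘L T) x, x⟫ := by
    intro x
    have hP2 : (S ∘L T) ((S ∘L T) x) = (S ∘L T) x := by
      have : T (S (T x)) = T x := congrFun (congrArg DFunLike.coe hTST) x
      show S (T (S (T x))) = S (T x)
      rw [this]
    have h1 : ⟪(adjoint T ∘L T) x, x⟫ = ⟪T x, T x⟫ := by
      show ⟪adjoint T (T x), x⟫ = _
      rw [adjoint_inner_left]
    have h2 : ⟪(S ∘L T) x, x⟫ = ⟪(S ∘L T) x, (S ∘L T) x⟫ := by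
      conv_lhs => rw [← hP2]
      exact hST ((S ∘L T) x) x
    rw [h1, h2, inner_self_eq_norm_sq_to_K, inner_self_eq_norm_sq_to_K,
      aux_norm_eq T S hTnorm hSnorm hTST x]
  exact ContinuousLinearMap.coe_inj.mp (hext key)

/-- Hilbert space form of the characterization of partial isometries: contractions `T`, `S`
with `TST = T`, `STS = S` and `ST`, `TS` self-adjoint satisfy `S = T†`; hence `T` is a
partial isometry with source projection `S∘T` and range projection `T∘S`, and `T` is
isometric on the range of `S∘T`. -/
theorem stmt1 {E : Type*} [NormedAddCommGroup E] [InnerProductSpace ℂ E] [CompleteSpace E]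
    (T S : E →L[ℂ] E) (hTnorm : ‖T‖ ≤ 1) (hSnorm : ‖S‖ ≤ 1)
    (hTST : T ∘L S ∘L T = T) (hSTS : S ∘L T ∘L S = S)
    (hST : ∀ x y : E, ⟪(S ∘L T) x, y⟫ = ⟪x, (S ∘L T) y⟫)
    (hTS : ∀ x y : E, ⟪(T ∘L S) x, y⟫ = ⟪x, (T ∘L S) y⟫) :
    S = adjoint T ∧
    T ∘L adjoint T ∘L T = T ∧
    adjoint T ∘L T = S ∘L T ∧
    T ∘L adjoint T = T ∘L S ∧
    ∀ x : E, ‖T ((S ∘L T) x)‖ = ‖(S ∘L T) x‖ := by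
  -- `T† T = S T`
  have h1 : adjoint T ∘L T = S ∘L T := aux_adj T S hTnorm hSnorm hTST hST
  -- `T S` is self-adjoint as an operator identity
  have hTSsa : adjoint (T ∘L S) = T ∘L S := by
    ext x
    refine ext_inner_right ℂ fun y => ?_
    rw [adjoint_inner_left]
    exact (hTS x y).symm
  -- norms of adjoints
  have hTadjnorm : ‖adjoint T‖ ≤ 1 := by
    rw [LinearIsometryEquiv.norm_map adjoint T]; exact hTnorm
  have hSadjnorm : ‖adjoint S‖ ≤ 1 := by
    rw [LinearIsometryEquiv.norm_map adjoint S]; exact hSnorm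
  -- the adjoint pair satisfies the same hypotheses
  have hadjTST : adjoint T ∘L adjoint S ∘L adjoint T = adjoint T := by
    have := congrArg adjoint hTST
    simpa [adjoint_comp, comp_assoc] using this
  have hadjST : adjoint S ∘L adjoint T = T ∘L S := by
    rw [← adjoint_comp, hTSsa]
  have hadjSTinner : ∀ x y : E,
      ⟪(adjoint S ∘L adjoint T) x, y⟫ = ⟪x, (adjoint S ∘L adjoint T) y⟫ := by
    intro x y; rw [hadjST]; exact hTS x y
  -- apply the key step to the adjoint pair: `T T† = T S`
  have h2 : T ∘L adjoint T = T ∘L S := by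
    have := aux_adj (adjoint T) (adjoint S) hTadjnorm hSadjnorm hadjTST hadjSTinner
    rwa [adjoint_adjoint, hadjST] at this
  -- `T T† T = T`
  have h3 : T ∘L adjoint T ∘L T = T := by
    rw [h1, hTST]
  -- `T† T T† = T†`
  have h4 : adjoint T ∘L T ∘L adjoint T = adjoint T := by
    have := congrArg adjoint h3
    simpa [adjoint_comp, comp_assoc] using this
  -- `S = T†`
  have hS : S = adjoint T := by
    calc S = S ∘L T ∘L S := hSTS.symm
    _ = S ∘L T ∘L adjoint T := by rw [← h2]
    _ = (S ∘L T) ∘L adjoint T := by rw [← comp_assoc]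
    _ = (adjoint T ∘L T) ∘L adjoint T := by rw [← h1]
    _ = adjoint T ∘L T ∘L adjoint T := by rw [comp_assoc]
    _ = adjoint T := h4
  refine ⟨hS, h3, h1, h2, fun x => ?_⟩
  have hTP : T ((S ∘L T) x) = T x := by
    conv_rhs => rw [← hTST]
    rfl
  rw [hTP]
  exact aux_norm_eq T S hTnorm hSnorm hTST x
end

section
/- Let A be a C*-algebra and let θ, θ' : A →ₗ[ℂ] A be linear maps which are multiplicative (θ(x·y) = θ(x)·θ(y) and likewise for θ') and star-preserving (θ(star x) = star(θ x) and likewise for θ'), and which satisfy star(θ x)·y = θ(star x · θ'(y)) and star(θ' x)·y = θ'(star x · θ(y)) for all x, y ∈ A. Set P = θ ∘ θ'. Then: (i) P(a·b) = P(a)·b = a·P(b) = P(a)·P(b) for all a, b ∈ A; (ii) P ∘ P = P; (iii) if σ, σ' : A →ₗ[ℂ] A is another pair of maps with the same properties and Q = σ ∘ σ', then P ∘ Q = Q ∘ P. -/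
/-- Left multiplication is faithful in a C*-algebra. -/
private lemma stmt6_cancel {A : Type*} [NonUnitalCStarAlgebra A] {x y : A}
    (h : ∀ b : A, x * b = y * b) : x = y := by
  have h0 : (x - y) * star (x - y) = 0 := by
    rw [sub_mul, h (star (x - y)), sub_self]
  exact sub_eq_zero.mp (CStarRing.mul_star_self_eq_zero_iff (x - y) |>.mp h0)

/-- If `θ, θ'` are *-endomorphisms of a C*-algebra forming an adjoint pair with respect to the
inner product `⟨x, y⟩ = star x * y`, then `P = θ ∘ θ'` acts as a central multiplier,
is idempotent, and commutes with any other such composition `Q = σ ∘ σ'`. -/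
theorem stmt6 {A : Type*} [NonUnitalCStarAlgebra A]
    (θ θ' σ σ' : A →ₗ[ℂ] A)
    (hθmul : ∀ x y : A, θ (x * y) = θ x * θ y)
    (hθ'mul : ∀ x y : A, θ' (x * y) = θ' x * θ' y)
    (hθstar : ∀ x : A, θ (star x) = star (θ x))
    (hθ'star : ∀ x : A, θ' (star x) = star (θ' x))
    (hθadj : ∀ x y : A, star (θ x) * y = θ (star x * θ' y))
    (hθ'adj : ∀ x y : A, star (θ' x) * y = θ' (star x * θ y))
    (hσmul : ∀ x y : A, σ (x * y) = σ x * σ y)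
    (hσ'mul : ∀ x y : A, σ' (x * y) = σ' x * σ' y)
    (hσstar : ∀ x : A, σ (star x) = star (σ x))
    (hσ'star : ∀ x : A, σ' (star x) = star (σ' x))
    (hσadj : ∀ x y : A, star (σ x) * y = σ (star x * σ' y))
    (hσ'adj : ∀ x y : A, star (σ' x) * y = σ' (star x * σ y)) :
    (∀ a b : A, (θ ∘ₗ θ') (a * b) = (θ ∘ₗ θ') a * b ∧
      (θ ∘ₗ θ') a * b = a * (θ ∘ₗ θ') b ∧
      (θ ∘ₗ θ') a * b = (θ ∘ₗ θ') a * (θ ∘ₗ θ') b) ∧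
    (θ ∘ₗ θ') ∘ₗ (θ ∘ₗ θ') = θ ∘ₗ θ' ∧
    (θ ∘ₗ θ') ∘ₗ (σ ∘ₗ σ') = (σ ∘ₗ σ') ∘ₗ (θ ∘ₗ θ') := by
  set P : A →ₗ[ℂ] A := θ ∘ₗ θ' with hP
  set Q : A →ₗ[ℂ] A := σ ∘ₗ σ' with hQ
  have hPap : ∀ a, P a = θ (θ' a) := fun a => rfl
  have hQap : ∀ a, Q a = σ (σ' a) := fun a => rfl
  -- θ x * y = θ (x * θ' y)
  have h1 : ∀ x y : A, θ x * y = θ (x * θ' y) := by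
    intro x y
    have := hθadj (star x) y
    rwa [hθstar, star_star, star_star] at this
  have h1σ : ∀ x y : A, σ x * y = σ (x * σ' y) := by
    intro x y
    have := hσadj (star x) y
    rwa [hσstar, star_star, star_star] at this
  -- P(a*b) = P a * b
  have hPL : ∀ a b : A, P (a * b) = P a * b := by
    intro a b
    rw [hPap, hPap, hθ'mul, h1 (θ' a) b]
  have hQL : ∀ a b : A, Q (a * b) = Q a * b := by
    intro a b
    rw [hQap, hQap, hσ'mul, h1σ (σ' a) b]
  -- P star-preserving
  have hPstar : ∀ a : A, P (star a) = star (P a) := by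
    intro a; rw [hPap, hPap, hθ'star, hθstar]
  -- P(a*b) = a * P b
  have hPR : ∀ a b : A, P (a * b) = a * P b := by
    intro a b
    have := hPL (star b) (star a)
    have h2 : P (star (a * b)) = star (a * P b) := by
      rw [star_mul, this, star_mul, hPstar]
    rw [hPstar] at h2
    exact star_injective h2
  -- P a * P b = P(a*b)
  have hPP : ∀ a b : A, P a * P b = P (a * b) := by
    intro a b
    rw [hPap, hPap, hPap, ← hθmul, ← hθ'mul]
  refine ⟨fun a b => ⟨(hPL a b).symm ▸ rfl, ?_, ?_⟩, ?_, ?_⟩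
  · rw [← hPL, hPR]
  · rw [← hPL, ← hPP]
  · ext a
    simp only [LinearMap.comp_apply]
    apply stmt6_cancel (x := P (P a)) (y := P a)
    intro b
    calc P (P a) * b = P (P a * b) := (hPL _ _).symm
      _ = P (a * P b) := by rw [← hPL, hPR]
      _ = P a * P b := hPL _ _
      _ = P a * b := by rw [hPP, hPL]
  · ext a
    simp only [LinearMap.comp_apply]
    apply stmt6_cancel (x := P (Q a)) (y := Q (P a))
    intro b
    calc P (Q a) * b = P (Q a * b) := (hPL _ _).symm
      _ = Q a * P b := hPR _ _
      _ = Q (a * P b) := (hQL _ _).symm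
      _ = Q (P a * b) := by rw [← hPL, hPR]
      _ = Q (P a) * b := hQL _ _
end

section
/- Let A be a C*-algebra and let α, β : A →ₗ[ℂ] A be linear maps which are multiplicative and star-preserving, and which satisfy α ∘ β ∘ α = α and β ∘ α ∘ β = β. Suppose the compositions p = α ∘ β and q = β ∘ α act as central multipliers, i.e. p(a)·b = a·p(b) and q(a)·b = a·q(b) for all a, b ∈ A. Then star(α a)·b = α(star a · β(b)) and star(β a)·b = β(star a · α(b)) for all a, b ∈ A. -/
/-- Converse characterization of Hilbert C*-algebras: if `α`, `β` are multiplicative,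
star-preserving linear maps on a C*-algebra with `αβα = α`, `βαβ = β`, whose compositions
`α∘β` and `β∘α` act as central multipliers, then the defining inner-product identities
`⟨α(x), y⟩ = α(⟨x, β(y)⟩)` and `⟨β(x), y⟩ = β(⟨x, α(y)⟩)` hold (with `⟨x, y⟩ = star x * y`). -/
theorem stmt9 {A : Type*} [NonUnitalCStarAlgebra A]
    (α β : A →ₗ[ℂ] A)
    (hαmul : ∀ x y : A, α (x * y) = α x * α y)
    (hβmul : ∀ x y : A, β (x * y) = β x * β y)
    (hαstar : ∀ x : A, α (star x) = star (α x))
    (hβstar : ∀ x : A, β (star x) = star (β x))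
    (hαβα : α ∘ₗ β ∘ₗ α = α) (hβαβ : β ∘ₗ α ∘ₗ β = β)
    (hp : ∀ a b : A, (α ∘ₗ β) a * b = a * (α ∘ₗ β) b)
    (hq : ∀ a b : A, (β ∘ₗ α) a * b = a * (β ∘ₗ α) b) :
    (∀ a b : A, star (α a) * b = α (star a * β b)) ∧
    (∀ a b : A, star (β a) * b = β (star a * α b)) := by
  constructor
  · intro a b
    have h1 : (α ∘ₗ β) (α (star a)) = α (star a) := by
      have := congrArg (fun f : A →ₗ[ℂ] A => f (star a)) hαβα
      simpa using this
    calc star (α a) * b = α (star a) * b := by rw [hαstar]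
      _ = (α ∘ₗ β) (α (star a)) * b := by rw [h1]
      _ = α (star a) * (α ∘ₗ β) b := hp _ _
      _ = α (star a) * α (β b) := rfl
      _ = α (star a * β b) := (hαmul _ _).symm
  · intro a b
    have h1 : (β ∘ₗ α) (β (star a)) = β (star a) := by
      have := congrArg (fun f : A →ₗ[ℂ] A => f (star a)) hβαβ
      simpa using this
    calc star (β a) * b = β (star a) * b := by rw [hβstar]
      _ = (β ∘ₗ α) (β (star a)) * b := by rw [h1]
      _ = β (star a) * (β ∘ₗ α) b := hq _ _
      _ = β (star a) * β (α b) := rfl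
      _ = β (star a * α b) := (hβmul _ _).symm
end

section
/- Let G be a semimultiplicative set with composability predicate Comp and partial multiplication mul which is associative (whenever Comp s t and Comp (mul s t) u hold, also Comp t u and Comp s (mul t u) hold and mul (mul s t) u = mul s (mul t u), and conversely whenever Comp t u and Comp s (mul t u) hold, also Comp s t and Comp (mul s t) u hold with the same equality) and left cancellative (Comp g h₁ and Comp g h₂ with mul g h₁ = mul g h₂ imply h₁ = h₂). Let ℓ²(G) = lp (fun _ : G => ℂ) 2 with its Hilbert space structure and let e_h denote the standard basis vector lp.single 2 h 1. Then for every g ∈ G there exists a unique continuous linear map λ_g : ℓ²(G) → ℓ²(G) such that λ_g(e_h) = e_{mul g h} whenever Comp g h holds and λ_g(e_h) = 0 otherwise; moreover ‖λ_g‖ ≤ 1, λ_g ∘ (λ_g)† ∘ λ_g = λ_g (λ_g is a partial isometry, where † is the Hilbert-space adjoint), and λ_{mul g h} = λ_g ∘ λ_h whenever Comp g h holds. -/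
/-!
Left cancellation makes `h ↦ g·h` an injection from the domain `{h | Comp g h}` into `G`, so
`λ_g` is a *partial permutation operator*: for injections `i, j : A → G` the map
`e (i a) ↦ e (j a)`, killing the other basis vectors, is a contraction of `ℓ²(G)` whose adjoint
is the operator of `(j, i)`; composing the three operators of `λ_g ∘ λ_g† ∘ λ_g` returns `λ_g` on
every basis vector. Multiplicativity is also checked on basis vectors, where the two
associativity axioms say that `g·(h·k)` is defined iff `(g·h)·k` is, with the same value.
-/

open ContinuousLinearMap

open Function ENNReal

theorem ContinuousLinearMap.ext_lp_single {𝕜 G E : Type*} [RCLike 𝕜] [DecidableEq G]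
    [NormedAddCommGroup E] [NormedSpace 𝕜 E] {p : ℝ≥0∞} [Fact (1 ≤ p)] (hp : p ≠ ⊤)
    {S T : lp (fun _ : G => 𝕜) p →L[𝕜] E}
    (h : ∀ g, S (lp.single p g 1) = T (lp.single p g 1)) : S = T := by
  ext x
  have hsingle : ∀ g, lp.single p g (x g) = x g • lp.single (E := fun _ : G => 𝕜) p g 1 :=
    fun g => by rw [← lp.single_smul, smul_eq_mul, mul_one]
  have hx := lp.hasSum_single hp x
  refine (hx.mapL S).unique ?_
  simpa only [hsingle, map_smul, h] using hx.mapL T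

section Transfer

variable {𝕜 A G : Type*} [RCLike 𝕜] {j i : A → G}

theorem norm_rpow_extend_zero {E : Type*} [NormedAddCommGroup E] (f : A → E) {r : ℝ} (hr : 0 < r) :
    (fun k => ‖extend j f 0 k‖ ^ r) = extend j (fun a => ‖f a‖ ^ r) 0 := by
  funext k
  rw [apply_extend (fun y : E => ‖y‖ ^ r)]
  congr 1
  funext y
  simp [Real.zero_rpow hr.ne']

theorem tsum_norm_rpow_extend_zero_comp_le (hj : Injective j) (hi : Injective i) {p : ℝ≥0∞}
    (hp : 0 < p.toReal) (x : lp (fun _ : G => 𝕜) p) :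
    ∑' k, ‖extend j (x ∘ i) 0 k‖ ^ p.toReal ≤ ∑' k, ‖x k‖ ^ p.toReal := by
  have hx := (lp.memℓp x).summable hp
  rw [norm_rpow_extend_zero _ hp, tsum_extend_zero hj]
  exact (hx.comp_injective hi).tsum_le_tsum_of_inj i hi (fun _ _ => by positivity)
    (fun _ => le_rfl) hx

theorem memℓp_extend_zero_comp (hj : Injective j) (hi : Injective i) {p : ℝ≥0∞}
    (hp : 0 < p.toReal) (x : lp (fun _ : G => 𝕜) p) : Memℓp (extend j (x ∘ i) 0) p := by
  refine memℓp_gen ?_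
  rw [norm_rpow_extend_zero _ hp, summable_extend_zero hj]
  exact ((lp.memℓp x).summable hp).comp_injective hi

noncomputable def lpTransfer (hj : Injective j) (hi : Injective i) :
    lp (fun _ : G => 𝕜) 2 →L[𝕜] lp (fun _ : G => 𝕜) 2 :=
  LinearMap.mkContinuous
    { toFun x := ⟨extend j (x ∘ i) 0, memℓp_extend_zero_comp hj hi (by norm_num) x⟩
      map_add' x y := lp.ext <| by
        have h := extend_add j (x ∘ i) (y ∘ i) (0 : G → 𝕜) 0
        rw [add_zero] at h
        exact h
      map_smul' c x := lp.ext <| by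
        simpa [Pi.smul_comp] using extend_smul c j (x ∘ i) (0 : G → 𝕜) }
    1 fun x => by
      rw [one_mul]
      refine lp.norm_le_of_tsum_le (by norm_num) (norm_nonneg x) ?_
      rw [lp.norm_rpow_eq_tsum (by norm_num)]
      exact tsum_norm_rpow_extend_zero_comp_le hj hi (by norm_num) x

variable (hj : Injective j) (hi : Injective i)

theorem coe_lpTransfer_apply (x : lp (fun _ : G => 𝕜) 2) :
    ⇑(lpTransfer hj hi x) = extend j (x ∘ i) 0 := rfl

theorem norm_lpTransfer_le : ‖lpTransfer (𝕜 := 𝕜) hj hi‖ ≤ 1 :=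
  LinearMap.mkContinuous_norm_le _ zero_le_one _

theorem inner_lpTransfer_left (x y : lp (fun _ : G => 𝕜) 2) :
    inner 𝕜 (lpTransfer hj hi x) y = ∑' a, inner 𝕜 (x (i a)) (y (j a)) := by
  have h : (fun k => inner 𝕜 (lpTransfer hj hi x k) (y k))
      = extend j (fun a => inner 𝕜 (x (i a)) (y (j a))) 0 := by
    funext k
    by_cases hk : k ∈ Set.range j
    · obtain ⟨a, rfl⟩ := hk
      rw [coe_lpTransfer_apply, hj.extend_apply, hj.extend_apply, comp_apply]
    · rw [coe_lpTransfer_apply, extend_apply' _ _ _ hk, extend_apply' _ _ _ hk]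
      simp
  rw [lp.inner_eq_tsum, h, tsum_extend_zero hj]

theorem adjoint_lpTransfer : adjoint (lpTransfer (𝕜 := 𝕜) hj hi) = lpTransfer hi hj := by
  refine ((eq_adjoint_iff _ _).mpr fun x y => ?_).symm
  rw [← inner_conj_symm x, inner_lpTransfer_left, inner_lpTransfer_left, RCLike.conj_tsum]
  simp only [inner_conj_symm]

variable [DecidableEq G]

theorem lpTransfer_single (a : A) (c : 𝕜) :
    lpTransfer hj hi (lp.single 2 (i a) c) = lp.single 2 (j a) c := by
  ext k
  rw [coe_lpTransfer_apply]
  by_cases hk : k ∈ Set.range j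
  · obtain ⟨b, rfl⟩ := hk
    rw [hj.extend_apply, comp_apply]
    by_cases hba : b = a
    · rw [hba, lp.single_apply_self, lp.single_apply_self]
    · rw [lp.single_apply_ne _ _ _ (hi.ne hba), lp.single_apply_ne _ _ _ (hj.ne hba)]
  · rw [extend_apply' _ _ _ hk, Pi.zero_apply, lp.single_apply_ne]
    rintro rfl
    exact hk ⟨a, rfl⟩

theorem lpTransfer_single_of_notMem_range {g : G} (hg : g ∉ Set.range i) (c : 𝕜) :
    lpTransfer hj hi (lp.single 2 g c) = 0 := by
  ext k
  rw [coe_lpTransfer_apply]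
  by_cases hk : k ∈ Set.range j
  · obtain ⟨b, rfl⟩ := hk
    rw [hj.extend_apply, comp_apply, lp.single_apply_ne _ _ _ fun hb => hg ⟨b, hb⟩]
    rfl
  · exact extend_apply' _ _ _ hk

theorem lpTransfer_comp_adjoint_comp :
    lpTransfer (𝕜 := 𝕜) hj hi ∘L adjoint (lpTransfer hj hi) ∘L lpTransfer hj hi
      = lpTransfer hj hi := by
  refine ContinuousLinearMap.ext_lp_single (by norm_num) fun g => ?_
  rw [adjoint_lpTransfer]
  by_cases hg : g ∈ Set.range i
  · obtain ⟨a, rfl⟩ := hg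
    simp only [ContinuousLinearMap.comp_apply, lpTransfer_single]
  · simp only [ContinuousLinearMap.comp_apply, lpTransfer_single_of_notMem_range _ _ hg,
      map_zero]

end Transfer

section LeftRegular

variable {𝕜 G : Type*} [RCLike 𝕜] {Comp : G → G → Prop} {mul : ∀ g h, Comp g h → G}

theorem injective_mul_left
    (hcancel : ∀ g h₁ h₂ (c₁ : Comp g h₁) (c₂ : Comp g h₂), mul g h₁ c₁ = mul g h₂ c₂ → h₁ = h₂)
    (g : G) : Injective fun h : {h // Comp g h} => mul g h.1 h.2 :=
  fun h₁ h₂ hmul => Subtype.ext (hcancel g h₁ h₂ h₁.2 h₂.2 hmul)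

variable
  (hcancel : ∀ g h₁ h₂ (c₁ : Comp g h₁) (c₂ : Comp g h₂), mul g h₁ c₁ = mul g h₂ c₂ → h₁ = h₂)

noncomputable def leftRegular (g : G) : lp (fun _ : G => 𝕜) 2 →L[𝕜] lp (fun _ : G => 𝕜) 2 :=
  lpTransfer (injective_mul_left hcancel g) Subtype.val_injective

variable [DecidableEq G]

theorem leftRegular_single {g h : G} (c : Comp g h) (v : 𝕜) :
    leftRegular (𝕜 := 𝕜) hcancel g (lp.single 2 h v) = lp.single 2 (mul g h c) v :=
  lpTransfer_single _ _ (⟨h, c⟩ : {h // Comp g h}) v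

theorem leftRegular_single_of_not_comp {g h : G} (c : ¬ Comp g h) (v : 𝕜) :
    leftRegular (𝕜 := 𝕜) hcancel g (lp.single 2 h v) = 0 :=
  lpTransfer_single_of_notMem_range _ _ (fun ⟨a, ha⟩ => c (ha ▸ a.2)) v

theorem leftRegular_mul
    (assoc₁ : ∀ s t u (c : Comp s t) (c₁ : Comp (mul s t c) u),
      ∃ (c₂ : Comp t u) (c₃ : Comp s (mul t u c₂)),
        mul (mul s t c) u c₁ = mul s (mul t u c₂) c₃)
    (assoc₂ : ∀ s t u (c₂ : Comp t u), Comp s (mul t u c₂) → ∃ c : Comp s t, Comp (mul s t c) u)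
    {g h : G} (c : Comp g h) :
    leftRegular (𝕜 := 𝕜) hcancel (mul g h c) = leftRegular hcancel g ∘L leftRegular hcancel h := by
  refine ContinuousLinearMap.ext_lp_single (by norm_num) fun k => ?_
  rw [ContinuousLinearMap.comp_apply]
  by_cases c₁ : Comp (mul g h c) k
  · obtain ⟨c₂, c₃, hmul⟩ := assoc₁ g h k c c₁
    rw [leftRegular_single _ c₁, leftRegular_single _ c₂, leftRegular_single _ c₃, hmul]
  · rw [leftRegular_single_of_not_comp _ c₁]
    by_cases c₂ : Comp h k
    · have c₃ : ¬ Comp g (mul h k c₂) := fun c₃ => c₁ (assoc₂ g h k c₂ c₃).snd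
      rw [leftRegular_single _ c₂, leftRegular_single_of_not_comp _ c₃]
    · rw [leftRegular_single_of_not_comp _ c₂, map_zero]

end LeftRegular

/-- The left regular representation of an associative semimultiplicative set `(G, Comp, mul)`
with left cancellation: for each `g` there is a unique bounded operator `Λ g` on `ℓ²(G)` with
`Λ g (e h) = e (g·h)` when `g·h` is defined and `Λ g (e h) = 0` otherwise; each `Λ g` is a
contraction and a partial isometry, and `Λ (g·h) = Λ g ∘ Λ h` whenever `g·h` is defined. -/
theorem stmt10 {G : Type*} [DecidableEq G]
    (Comp : G → G → Prop) (mul : ∀ g h, Comp g h → G)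
    (assoc₁ : ∀ s t u (c : Comp s t) (c₁ : Comp (mul s t c) u),
      ∃ (c₂ : Comp t u) (c₃ : Comp s (mul t u c₂)),
        mul (mul s t c) u c₁ = mul s (mul t u c₂) c₃)
    (assoc₂ : ∀ s t u (c₂ : Comp t u) (c₃ : Comp s (mul t u c₂)),
      ∃ (c : Comp s t) (c₁ : Comp (mul s t c) u),
        mul (mul s t c) u c₁ = mul s (mul t u c₂) c₃)
    (hcancel : ∀ g h₁ h₂ (c₁ : Comp g h₁) (c₂ : Comp g h₂),
      mul g h₁ c₁ = mul g h₂ c₂ → h₁ = h₂) :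
    ∃ Λ : G → (lp (fun _ : G => ℂ) 2 →L[ℂ] lp (fun _ : G => ℂ) 2),
      (∀ g h (c : Comp g h), Λ g (lp.single 2 h 1) = lp.single 2 (mul g h c) 1) ∧
      (∀ g h, ¬ Comp g h → Λ g (lp.single 2 h 1) = 0) ∧
      (∀ g (T : lp (fun _ : G => ℂ) 2 →L[ℂ] lp (fun _ : G => ℂ) 2),
        (∀ h (c : Comp g h), T (lp.single 2 h 1) = lp.single 2 (mul g h c) 1) →
        (∀ h, ¬ Comp g h → T (lp.single 2 h 1) = 0) → T = Λ g) ∧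
      (∀ g, ‖Λ g‖ ≤ 1) ∧
      (∀ g, Λ g ∘L adjoint (Λ g) ∘L Λ g = Λ g) ∧
      (∀ g h (c : Comp g h), Λ (mul g h c) = Λ g ∘L Λ h) := by
  refine ⟨leftRegular hcancel, fun g h c => leftRegular_single hcancel c 1,
    fun g h c => leftRegular_single_of_not_comp hcancel c 1, ?_, fun g => norm_lpTransfer_le _ _,
    fun g => lpTransfer_comp_adjoint_comp _ _,
    fun g h c => leftRegular_mul hcancel assoc₁
      (fun s t u c₂ c₃ => (assoc₂ s t u c₂ c₃).imp fun _ h => h.1) c⟩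
  intro g T hcomp hnot
  refine ContinuousLinearMap.ext_lp_single (by norm_num) fun h => ?_
  by_cases c : Comp g h
  · rw [hcomp h c, leftRegular_single hcancel c]
  · rw [hnot h c, leftRegular_single_of_not_comp hcancel c]
end

section
/- Let G be a semigroupoid: a type with composability predicate Comp and partial multiplication mul such that, whenever Comp s t holds, Comp (mul s t) u holds if and only if Comp t u holds, and in that case Comp s (mul t u) holds with mul (mul s t) u = mul s (mul t u). Assume also left cancellation: Comp g h₁ and Comp g h₂ with mul g h₁ = mul g h₂ imply h₁ = h₂. Let λ_g denote the left regular representation operators on ℓ²(G) = lp (fun _ : G => ℂ) 2, characterized by λ_g(e_h) = e_{mul g h} whenever Comp g h holds and λ_g(e_h) = 0 otherwise. Then λ has transferred left cancellation: for all g, h with Comp g h, one has (λ_g)† ∘ λ_g ∘ λ_h = λ_h, where † denotes the Hilbert-space adjoint. -/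
open ContinuousLinearMap
open scoped ENNReal lp InnerProductSpace

/-!
On basis vectors, `λ_g` is a partial injection (by left cancellation), so `⟪λ_g e_m, λ_g e_k⟫ = ⟪e_m, e_k⟫`
whenever `g·k` is defined, i.e. `λ_g† λ_g` fixes such `e_k`. Associativity shows that `λ_h e_k` is either
`0` or `e_{h·k}` with `g·(h·k)` defined, so `λ_g† λ_g λ_h` and `λ_h` agree on the basis.
-/

namespace lp

theorem ext_single {ι 𝕜 E : Type*} [NormedField 𝕜] [DecidableEq ι] {p : ℝ≥0∞}
    [Fact (1 ≤ p)] (hp : p ≠ ∞) [TopologicalSpace E] [AddCommMonoid E] [T2Space E] [Module 𝕜 E]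
    {T T' : lp (fun _ : ι => 𝕜) p →L[𝕜] E}
    (h : ∀ i, T (lp.single p i 1) = T' (lp.single p i 1)) : T = T' := by
  ext f
  have single_eq (i : ι) : lp.single p i (f i) = f i • lp.single (E := fun _ : ι => 𝕜) p i 1 := by
    rw [← lp.single_smul, smul_eq_mul, mul_one]
  have hf := lp.hasSum_single hp f
  refine (T.hasSum hf).unique ?_
  simpa only [single_eq, map_smul, h] using T'.hasSum hf

section

variable {ι 𝕜 : Type*} [RCLike 𝕜] [DecidableEq ι]

theorem eq_of_inner_single_left {x y : ℓ²(ι, 𝕜)}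
    (h : ∀ i, ⟪lp.single 2 i 1, x⟫_𝕜 = ⟪lp.single 2 i 1, y⟫_𝕜) : x = y := by
  ext i
  simpa [lp.inner_single_left] using h i

theorem inner_single_single (i j : ι) :
    ⟪lp.single (E := fun _ : ι => 𝕜) 2 i 1, lp.single 2 j 1⟫_𝕜 = if i = j then 1 else 0 := by
  rw [lp.inner_single_left, lp.single_apply, Pi.single_apply]
  split_ifs <;> simp_all

end

end lp

namespace ContinuousLinearMap

variable {ι κ 𝕜 : Type*} [RCLike 𝕜] [DecidableEq ι]

theorem adjoint_apply_apply_eq_self {E : Type*} [NormedAddCommGroup E] [InnerProductSpace 𝕜 E]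
    [CompleteSpace E] (T : ℓ²(ι, 𝕜) →L[𝕜] E) {x : ℓ²(ι, 𝕜)}
    (h : ∀ i, ⟪T (lp.single 2 i 1), T x⟫_𝕜 = ⟪lp.single 2 i 1, x⟫_𝕜) : adjoint T (T x) = x :=
  lp.eq_of_inner_single_left fun i => by rw [adjoint_inner_right, h]

theorem adjoint_apply_apply_single_of_partialInjective [DecidableEq κ]
    (T : ℓ²(ι, 𝕜) →L[𝕜] ℓ²(κ, 𝕜)) (P : ι → Prop) (σ : ∀ i, P i → κ)
    (hσ : ∀ i j hi hj, σ i hi = σ j hj → i = j)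
    (hT : ∀ i (hi : P i), T (lp.single 2 i 1) = lp.single 2 (σ i hi) 1)
    (hT₀ : ∀ i, ¬ P i → T (lp.single 2 i 1) = 0) {k : ι} (hk : P k) :
    adjoint T (T (lp.single 2 k 1)) = lp.single 2 k 1 := by
  refine adjoint_apply_apply_eq_self T fun i => ?_
  by_cases hi : P i
  · have hσik : σ i hi = σ k hk ↔ i = k := ⟨hσ i k hi hk, fun h => by subst h; rfl⟩
    simp only [hT i hi, hT k hk, lp.inner_single_single, hσik]
  · have hik : i ≠ k := fun h => hi (h ▸ hk)
    rw [hT₀ i hi, inner_zero_left, lp.inner_single_single, if_neg hik]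

end ContinuousLinearMap

/-- For a semigroupoid `(G, Comp, mul)` with left cancellation, the left regular representation
`Λ` on `ℓ²(G)` (characterized by `Λ g (e h) = e (g·h)` if `g·h` is defined, and `0` otherwise)
has transferred left cancellation: `(Λ g)† ∘ Λ g ∘ Λ h = Λ h` whenever `g·h` is defined. -/
theorem stmt11 {G : Type*} [DecidableEq G]
    (Comp : G → G → Prop) (mul : ∀ g h, Comp g h → G)
    (hsg₁ : ∀ s t u (c : Comp s t), Comp (mul s t c) u ↔ Comp t u)
    (hsg₂ : ∀ s t u (c : Comp s t) (c' : Comp t u) (c₁ : Comp (mul s t c) u),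
      ∃ c₂ : Comp s (mul t u c'), mul (mul s t c) u c₁ = mul s (mul t u c') c₂)
    (hcancel : ∀ g h₁ h₂ (c₁ : Comp g h₁) (c₂ : Comp g h₂),
      mul g h₁ c₁ = mul g h₂ c₂ → h₁ = h₂)
    (Λ : G → (lp (fun _ : G => ℂ) 2 →L[ℂ] lp (fun _ : G => ℂ) 2))
    (hΛ₁ : ∀ g h (c : Comp g h), Λ g (lp.single 2 h 1) = lp.single 2 (mul g h c) 1)
    (hΛ₂ : ∀ g h, ¬ Comp g h → Λ g (lp.single 2 h 1) = 0) :
    ∀ g h, Comp g h → adjoint (Λ g) ∘L Λ g ∘L Λ h = Λ h := by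
  intro g h c
  refine lp.ext_single ENNReal.ofNat_ne_top fun k => ?_
  simp only [comp_apply]
  by_cases ck : Comp h k
  · obtain ⟨c₂, -⟩ := hsg₂ g h k c ck ((hsg₁ g h k c).mpr ck)
    rw [hΛ₁ h k ck]
    exact adjoint_apply_apply_single_of_partialInjective (Λ g) (Comp g) (mul g) (hcancel g)
      (hΛ₁ g) (hΛ₂ g) c₂
  · rw [hΛ₂ h k ck, map_zero, map_zero]
end

section
/- Let X be a topological space, let U and V be clopen subsets of X, and let φ : U ≃ₜ V be a homeomorphism between the subspaces U and V. For f ∈ C₀(X, ℂ) (continuous functions vanishing at infinity) define α f : X → ℂ by (α f)(x) = f(φ x) for x ∈ U and (α f)(x) = 0 for x ∉ U, and define β analogously using φ⁻¹ : V ≃ₜ U. Then: (i) α f and β f belong to C₀(X, ℂ) for every f ∈ C₀(X, ℂ); (ii) α and β are ℂ-linear, multiplicative and star-preserving (α(f·k) = (α f)·(α k), α(conj f) = conj(α f), and likewise for β); (iii) α ∘ β ∘ α = α and β ∘ α ∘ β = β; (iv) star(α f)·k = α((star f)·(β k)) and star(β f)·k = β((star f)·(α k)) for all f, k ∈ C₀(X,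 ℂ). -/
open scoped ZeroAtInfty Classical

/-!
The map `α` is the extension by zero of `f ∘ φ : U → ℂ`. Restricting `f` to the closed set `V` and
composing with the homeomorphism `φ` keeps it vanishing at infinity, and extending by zero from a
clopen set keeps both continuity and vanishing at infinity. All the algebraic identities are then
checked pointwise: off `U` both sides vanish, and on `U` they reduce to `φ.symm ∘ φ = id`.
-/

section

open Filter

variable {X R : Type*} [TopologicalSpace X] [TopologicalSpace R]

theorem IsClopen.continuous_dite_zero [Zero R] {s : Set X} (hs : IsClopen s) {f : s → R}
    (hf : Continuous f) : Continuous fun x => if h : x ∈ s then f ⟨x, h⟩ else 0 := by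
  set F : X → R := fun x => if h : x ∈ s then f ⟨x, h⟩ else 0
  refine continuous_iff_continuousAt.2 fun x => ?_
  by_cases hx : x ∈ s
  · have hF : F ∘ Subtype.val = f := funext fun y => dif_pos y.2
    refine (hs.isOpen.isOpenEmbedding_subtypeVal.continuousAt_iff (x := ⟨x, hx⟩)).1 ?_
    rw [hF]
    exact hf.continuousAt
  · have hF : F ∘ Subtype.val = fun _ : ↥sᶜ => 0 := funext fun y => dif_neg y.2
    refine (hs.compl.isOpen.isOpenEmbedding_subtypeVal.continuousAt_iff (x := ⟨x, hx⟩)).1 ?_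
    rw [hF]
    exact continuousAt_const

def IsClosed.subtypeValCocompactMap {s : Set X} (hs : IsClosed s) : CocompactMap s X :=
  ⟨⟨Subtype.val, continuous_subtype_val⟩, hs.isClosedEmbedding_subtypeVal.tendsto_cocompact⟩

namespace ZeroAtInftyContinuousMap

variable {U V : Set X}

noncomputable def extendByZero [Zero R] (hU : IsClopen U) (f : C₀(U, R)) : C₀(X, R) where
  toFun x := if h : x ∈ U then f ⟨x, h⟩ else 0
  continuous_toFun := hU.continuous_dite_zero f.continuous
  zero_at_infty' := by
    refine hasBasis_cocompact.tendsto_left_iff.2 fun t ht => ?_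
    obtain ⟨K, hK, hKt⟩ := hasBasis_cocompact.tendsto_left_iff.1 f.zero_at_infty' t ht
    refine ⟨Subtype.val '' K, hK.image continuous_subtype_val, fun x hx => ?_⟩
    by_cases h : x ∈ U
    · simpa [h] using hKt fun hK => hx ⟨_, hK, rfl⟩
    · simpa [h] using mem_of_mem_nhds ht

noncomputable def partialComp [Zero R] (hU : IsClopen U) (hV : IsClosed V) (φ : U ≃ₜ V)
    (f : C₀(X, R)) : C₀(X, R) :=
  extendByZero hU (f.comp (hV.subtypeValCocompactMap.comp φ.toCocompactMap))

theorem partialComp_apply [Zero R] (hU : IsClopen U) (hV : IsClosed V) (φ : U ≃ₜ V)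
    (f : C₀(X, R)) (x : X) :
    partialComp hU hV φ f x = if h : x ∈ U then f (φ ⟨x, h⟩) else 0 :=
  rfl

section OneSided

variable (hU : IsClopen U) (hV : IsClosed V) (φ : U ≃ₜ V)

noncomputable def partialCompₗ {𝕜 : Type*} [Semiring 𝕜] [AddCommMonoid R] [ContinuousAdd R]
    [Module 𝕜 R] [ContinuousConstSMul 𝕜 R] : C₀(X, R) →ₗ[𝕜] C₀(X, R) where
  toFun := partialComp hU hV φ
  map_add' f k := by
    ext x
    by_cases h : x ∈ U <;> simp [partialComp_apply, h]
  map_smul' c f := by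
    ext x
    by_cases h : x ∈ U <;> simp [partialComp_apply, h]

theorem partialComp_mul [MulZeroClass R] [ContinuousMul R] (f k : C₀(X, R)) :
    partialComp hU hV φ (f * k) = partialComp hU hV φ f * partialComp hU hV φ k := by
  ext x
  by_cases h : x ∈ U <;> simp [partialComp_apply, h]

theorem partialComp_star [AddMonoid R] [StarAddMonoid R] [ContinuousStar R] (f : C₀(X, R)) :
    partialComp hU hV φ (star f) = star (partialComp hU hV φ f) := by
  ext x
  by_cases h : x ∈ U <;> simp [partialComp_apply, h]

end OneSided

section TwoSided

variable (hU : IsClopen U) (hV : IsClopen V) (φ : U ≃ₜ V)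

theorem partialComp_partialComp_symm_partialComp [Zero R] (f : C₀(X, R)) :
    partialComp hU hV.isClosed φ
        (partialComp hV hU.isClosed φ.symm (partialComp hU hV.isClosed φ f)) =
      partialComp hU hV.isClosed φ f := by
  ext x
  by_cases h : x ∈ U
  · simp [partialComp_apply, h, (φ ⟨x, h⟩).2]
  · simp [partialComp_apply, h]

theorem star_partialComp_mul [NonUnitalNonAssocSemiring R] [StarAddMonoid R] [ContinuousMul R]
    [ContinuousStar R] (f k : C₀(X, R)) :
    star (partialComp hU hV.isClosed φ f) * k =
      partialComp hU hV.isClosed φ (star f * partialComp hV hU.isClosed φ.symm k) := by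
  ext x
  by_cases h : x ∈ U
  · simp [partialComp_apply, h, (φ ⟨x, h⟩).2]
  · simp [partialComp_apply, h]

end TwoSided

end ZeroAtInftyContinuousMap

end

open ZeroAtInftyContinuousMap in
/-- A homeomorphism `φ` between clopen subsets `U`, `V` of a topological space `X` induces
linear maps `α`, `β` on `C₀(X, ℂ)` (given by `(α f)(x) = f(φ x)` on `U` and `0` off `U`, and
analogously `β` via `φ⁻¹`), which are multiplicative, star-preserving, satisfy
`α ∘ β ∘ α = α`, `β ∘ α ∘ β = β`, and the adjointness identities
`star (α f) * k = α (star f * β k)` and `star (β f) * k = β (star f * α k)`. -/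
theorem stmt13 {X : Type*} [TopologicalSpace X]
    (U V : Set X) (hU : IsClopen U) (hV : IsClopen V) (φ : U ≃ₜ V) :
    ∃ α β : C₀(X, ℂ) →ₗ[ℂ] C₀(X, ℂ),
      (∀ (f : C₀(X, ℂ)) (x : X), α f x = if h : x ∈ U then f (φ ⟨x, h⟩) else 0) ∧
      (∀ (f : C₀(X, ℂ)) (x : X), β f x = if h : x ∈ V then f (φ.symm ⟨x, h⟩) else 0) ∧
      (∀ f k : C₀(X, ℂ), α (f * k) = α f * α k) ∧
      (∀ f k : C₀(X, ℂ), β (f * k) = β f * β k) ∧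
      (∀ f : C₀(X, ℂ), α (star f) = star (α f)) ∧
      (∀ f : C₀(X, ℂ), β (star f) = star (β f)) ∧
      (∀ f : C₀(X, ℂ), α (β (α f)) = α f) ∧
      (∀ f : C₀(X, ℂ), β (α (β f)) = β f) ∧
      (∀ f k : C₀(X, ℂ), star (α f) * k = α (star f * β k)) ∧
      (∀ f k : C₀(X, ℂ), star (β f) * k = β (star f * α k)) :=
  ⟨partialCompₗ hU hV.isClosed φ, partialCompₗ hV hU.isClosed φ.symm,
    partialComp_apply hU hV.isClosed φ, partialComp_apply hV hU.isClosed φ.symm,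
    partialComp_mul hU hV.isClosed φ, partialComp_mul hV hU.isClosed φ.symm,
    partialComp_star hU hV.isClosed φ, partialComp_star hV hU.isClosed φ.symm,
    partialComp_partialComp_symm_partialComp hU hV φ,
    partialComp_partialComp_symm_partialComp hV hU φ.symm,
    star_partialComp_mul hU hV φ, star_partialComp_mul hV hU φ.symm⟩
end

section
/- Let A be a C*-algebra and let u, v ∈ A satisfy: u·(star u)·u = u, v·(star v)·v = v, (u·v)·star(u·v)·(u·v) = u·v, (v·u)·star(v·u)·(v·u) = v·u (i.e. u, v, uv and vu are partial isometries), and u·v·u = u, v·u·v = v. Then v = star u. -/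
/-- An idempotent partial isometry in a C*-algebra is self-adjoint. -/
lemma idem_pi_selfadj {A : Type*} [NonUnitalCStarAlgebra A] (e : A)
    (h1 : e * e = e) (h2 : e * star e * e = e) : star e = e := by
  have h3 : e * star e * star e = e * star e := by
    calc e * star e * star e = e * (star e * star e) := by rw [mul_assoc]
      _ = e * star (e * e) := by rw [star_mul]
      _ = e * star e := by rw [h1]
  have h4 : e * star e * (e * star e) = e * star e := by
    calc e * star e * (e * star e) = e * star e * e * star e := by noncomm_ring
      _ = e * star e := by rw [h2]
  have hstar : star (e - e * star e) = star e - e * star e := by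
    simp [star_sub, star_mul, star_star]
  have key : (e - e * star e) * star (e - e * star e) = 0 := by
    rw [hstar, mul_sub, sub_mul, sub_mul, h3, h4, ← mul_assoc, h1]
    abel
  have hz : e - e * star e = 0 := by
    have := CStarRing.star_mul_self_eq_zero_iff (star (e - e * star e))
    rw [star_star] at this
    have h0 : star (e - e * star e) = 0 := this.mp key
    calc e - e * star e = star (star (e - e * star e)) := by rw [star_star]
      _ = 0 := by rw [h0, star_zero]
  have he : e * star e = e := by
    have := sub_eq_zero.mp hz
    exact this.symm
  calc star e = star (e * star e) := by rw [he]
    _ = e * star e := by rw [star_mul, star_star]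
    _ = e := he

/-- If `u`, `v`, `u*v` and `v*u` are partial isometries in a C*-algebra and
`u*v*u = u`, `v*u*v = v`, then `v = star u`. -/
theorem stmt14 {A : Type*} [NonUnitalCStarAlgebra A]
    (u v : A) (hu : u * star u * u = u) (hv : v * star v * v = v)
    (huv : (u * v) * star (u * v) * (u * v) = u * v)
    (hvu : (v * u) * star (v * u) * (v * u) = v * u)
    (huvu : u * v * u = u) (hvuv : v * u * v = v) :
    v = star u := by
  -- u*v and v*u are idempotent
  have huv2 : (u * v) * (u * v) = u * v := by
    calc (u * v) * (u * v) = u * (v * u * v) := by noncomm_ring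
      _ = u * v := by rw [hvuv]
  have hvu2 : (v * u) * (v * u) = v * u := by
    calc (v * u) * (v * u) = v * (u * v * u) := by noncomm_ring
      _ = v * u := by rw [huvu]
  have suv : star (u * v) = u * v := idem_pi_selfadj _ huv2 huv
  have svu : star (v * u) = v * u := idem_pi_selfadj _ hvu2 hvu
  -- star u * u * star u = star u
  have su : star u * u * star u = star u := by
    have := congrArg star hu
    rw [star_mul, star_mul, star_star] at this
    calc star u * u * star u = star u * (u * star u) := by rw [mul_assoc]
      _ = star u := this
  -- u*v = u * star u
  have step1 : u * v = u * star u := by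
    calc u * v = star (u * v) := suv.symm
      _ = star v * star u := by rw [star_mul]
      _ = star v * star (u * star u * u) := by rw [hu]
      _ = star v * (star u * (u * star u)) := by
            rw [star_mul, star_mul, star_star]
      _ = star (u * v) * (u * star u) := by rw [star_mul]; noncomm_ring
      _ = u * v * (u * star u) := by rw [suv]
      _ = (u * v * u) * star u := by noncomm_ring
      _ = u * star u := by rw [huvu]
  -- v*u = star u * u
  have step2 : v * u = star u * u := by
    calc v * u = star (v * u) := svu.symm
      _ = star u * star v := by rw [star_mul]
      _ = (star u * u * star u) * star v := by rw [su]
      _ = star u * u * star (v * u) := by rw [star_mul]; noncomm_ring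
      _ = star u * u * (v * u) := by rw [svu]
      _ = star u * (u * v * u) := by noncomm_ring
      _ = star u * u := by rw [huvu]
  calc v = v * u * v := hvuv.symm
    _ = star u * u * v := by rw [step2]
    _ = star u * (u * v) := by rw [mul_assoc]
    _ = star u * (u * star u) := by rw [step1]
    _ = star u * u * star u := by rw [mul_assoc]
    _ = star u := su
end

section
/- Let B be a C*-algebra, let E be a C*-module over B (a normed ℂ-vector space with a B-valued inner product ⟪·,·⟫ satisfying the CStarModule axioms, in particular ‖x‖² = ‖⟪x,x⟫‖ and the Cauchy–Schwarz inequality ‖⟪x,y⟫‖ ≤ ‖x‖·‖y‖), and let β, β' : B → B be maps with ‖β b‖ ≤ ‖b‖ and ‖β' b‖ ≤ ‖b‖ for all b ∈ B. Let U, V : E →ₗ[ℂ] E be linear maps satisfying U ∘ V ∘ U = U, V ∘ U ∘ V = V, ⟪U x, y⟫ = β(⟪x, V y⟫) and ⟪V x, y⟫ = β'(⟪x, U y⟫) for all x, y ∈ E. Then ‖U x‖ ≤ ‖x‖ and ‖V x‖ ≤ ‖x‖ for all x ∈ E; in particular U and V are bounded linear operators of norm at most 1. -/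
/-! `‖U x‖² = ‖⟪U x, U x⟫‖ = ‖β ⟪x, V U x⟫‖ ≤ ‖x‖ ‖V U x‖` by Cauchy–Schwarz, and the same
estimate for `V` at `U x` reads `‖V U x‖² ≤ ‖U x‖ ‖U V U x‖ = ‖U x‖²` because `UVU = U`.
Cauchy–Schwarz is inherited from Mathlib's `CStarModule` by viewing `E`, with its right
`A`-action, as a C⋆-module over `Aᵐᵒᵖ`. -/

/-- The Hilbert C⋆-module class as it stood in Mathlib of December 2024 (right `Aᵐᵒᵖ`-action,
inner product `A`-linear on the right); Mathlib's `CStarModule` now uses a left action. -/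
class CStarModuleOld (A E : Type*) [NonUnitalSemiring A] [StarRing A]
    [Module ℂ A] [AddCommGroup E] [Module ℂ E] [PartialOrder A] [SMul Aᵐᵒᵖ E] [Norm A] [Norm E]
    extends Inner A E where
  inner_add_right {x} {y} {z} : inner x (y + z) = inner x y + inner x z
  inner_self_nonneg {x} : 0 ≤ inner x x
  inner_self {x} : inner x x = 0 ↔ x = 0
  inner_op_smul_right {a : A} {x y : E} : inner x (MulOpposite.op a • y) = inner x y * a
  inner_smul_right_complex {z : ℂ} {x} {y} : inner x (z • y) = z • inner x y
  star_inner x y : star (inner x y) = inner y x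
  norm_eq_sqrt_norm_inner_self x : ‖x‖ = √‖inner x x‖

namespace CStarModuleOld

open MulOpposite

variable {A E : Type*} [NonUnitalCStarAlgebra A] [PartialOrder A]
  [AddCommGroup E] [Module ℂ E] [SMul Aᵐᵒᵖ E] [Norm E] [CStarModuleOld A E]

variable (A) in
abbrev toCStarModuleMulOpposite : CStarModule Aᵐᵒᵖ E where
  inner x y := op (inner A x y)
  inner_add_right {x y z} := by rw [inner_add_right, op_add]
  inner_self_nonneg := op_nonneg.mpr inner_self_nonneg
  inner_self := (op_eq_zero_iff _).trans inner_self
  inner_op_smul_right {a x y} := by rw [← op_unop a, inner_op_smul_right, op_mul]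
  inner_smul_right_complex {z x y} := by rw [inner_smul_right_complex, op_smul]
  star_inner x y := by rw [← op_star, star_inner]
  norm_eq_sqrt_norm_inner_self x := by rw [norm_op, norm_eq_sqrt_norm_inner_self (A := A)]

lemma norm_sq_eq (x : E) : ‖x‖ ^ 2 = ‖inner A x x‖ := by
  rw [norm_eq_sqrt_norm_inner_self (A := A), Real.sq_sqrt (norm_nonneg _)]

variable [StarOrderedRing A]

variable (A) in
lemma norm_inner_le (x y : E) : ‖inner A x y‖ ≤ ‖x‖ * ‖y‖ := by
  let := toCStarModuleMulOpposite A (E := E)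
  exact (norm_op _).symm.trans_le (CStarModule.norm_inner_le (A := Aᵐᵒᵖ) E)

lemma sq_norm_apply_le_of_inner_apply_left {β : A → A} (hβ : ∀ b, ‖β b‖ ≤ ‖b‖) {U V : E → E}
    (hU : ∀ x y, inner A (U x) y = β (inner A x (V y))) (x : E) :
    ‖U x‖ ^ 2 ≤ ‖x‖ * ‖V (U x)‖ :=
  calc ‖U x‖ ^ 2 = ‖inner A (U x) (U x)‖ := norm_sq_eq _
    _ = ‖β (inner A x (V (U x)))‖ := by rw [hU]
    _ ≤ ‖inner A x (V (U x))‖ := hβ _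
    _ ≤ ‖x‖ * ‖V (U x)‖ := norm_inner_le A _ _

lemma norm_apply_le_of_inner_apply_left {β β' : A → A} (hβ : ∀ b, ‖β b‖ ≤ ‖b‖)
    (hβ' : ∀ b, ‖β' b‖ ≤ ‖b‖) {U V : E → E}
    (hU : ∀ x y, inner A (U x) y = β (inner A x (V y)))
    (hV : ∀ x y, inner A (V x) y = β' (inner A x (U y)))
    (hUVU : ∀ x, U (V (U x)) = U x) (x : E) :
    ‖U x‖ ≤ ‖x‖ := by
  have h0 (y : E) : 0 ≤ ‖y‖ := norm_eq_sqrt_norm_inner_self (A := A) y ▸ Real.sqrt_nonneg _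
  have hVU : ‖V (U x)‖ ≤ ‖U x‖ := by
    have h := sq_norm_apply_le_of_inner_apply_left hβ' hV (U x)
    rw [hUVU, ← sq] at h
    exact (pow_le_pow_iff_left₀ (h0 _) (h0 _) two_ne_zero).mp h
  have hU2 : ‖U x‖ ^ 2 ≤ ‖x‖ * ‖U x‖ :=
    (sq_norm_apply_le_of_inner_apply_left hβ hU x).trans
      (mul_le_mul_of_nonneg_left hVU (h0 x))
  nlinarith [h0 x, h0 (U x)]

end CStarModuleOld

/-- Boundedness of the operators of an action on a Hilbert C*-module: if `U`, `V` are linear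
maps on a C*-module `E` over `B` with `UVU = U`, `VUV = V`, and
`⟪U x, y⟫ = β ⟪x, V y⟫`, `⟪V x, y⟫ = β' ⟪x, U y⟫` for norm-nonincreasing maps `β`, `β'` on `B`,
then `U` and `V` are contractions. -/
theorem stmt15 {B E : Type*} [NonUnitalCStarAlgebra B] [PartialOrder B] [StarOrderedRing B]
    [AddCommGroup E] [Module ℂ E] [SMul Bᵐᵒᵖ E] [Norm E] [CStarModuleOld B E]
    (β β' : B → B) (hβ : ∀ b, ‖β b‖ ≤ ‖b‖) (hβ' : ∀ b, ‖β' b‖ ≤ ‖b‖)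
    (U V : E →ₗ[ℂ] E)
    (hUVU : U ∘ₗ V ∘ₗ U = U) (hVUV : V ∘ₗ U ∘ₗ V = V)
    (hUadj : ∀ x y : E, (inner B (U x) y : B) = β (inner B x (V y)))
    (hVadj : ∀ x y : E, (inner B (V x) y : B) = β' (inner B x (U y))) :
    (∀ x : E, ‖U x‖ ≤ ‖x‖) ∧ (∀ x : E, ‖V x‖ ≤ ‖x‖) := by
  have hUVU' : ∀ x, U (V (U x)) = U x := LinearMap.congr_fun hUVU
  have hVUV' : ∀ x, V (U (V x)) = V x := LinearMap.congr_fun hVUV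
  exact ⟨CStarModuleOld.norm_apply_le_of_inner_apply_left hβ hβ' hUadj hVadj hUVU',
    CStarModuleOld.norm_apply_le_of_inner_apply_left hβ' hβ hVadj hUadj hVUV'⟩
end
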